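/- Fix τ ∈ ℍ, z ∈ ℂ, and a₁, a₂ ∈ ℂ with a₁ + a₂ = −2, and assume z ∉ ℤ+τℤ, 2z ∉ ℤ+τℤ, and (aᵢ+1)z ∉ ℤ+τℤ for i = 1,2. Let F₃(t) = [θ(t+z)θ'(0)/(θ(t)θ(z))]² · [θ(t−z)θ'(0)/(θ(t)θ(−z))] · [θ(t+2z)θ(z)/(θ(t+z)θ(2z))] · ∏_{i=1,2} [θ(t+(aᵢ+1)z)θ(z)/(θ(t+z)θ((aᵢ+1)z))]. Then F₃ has a simple pole at t = −z with residue lim_{t→−z} (t+z)·F₃(t) = −∏_{i=1,2} [θ(aᵢz)θ'(0)/(θ((1+aᵢ)z)θ(z))]. -/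

import Mathlib

open Complex Topology Filter

/-- `q = e^{2πiτ}`. -/
noncomputable def jq (τ : ℂ) : ℂ := Complex.exp (2 * Real.pi * I * τ)

/-- The Jacobi theta function
`θ(t,τ) = q^{1/8} · 2 sin(πt) · ∏_{n≥1}(1−qⁿ) · ∏_{n≥1}(1−qⁿe^{2πit})(1−qⁿe^{−2πit})`,
where `q^{1/8} = e^{πiτ/4}`. -/
noncomputable def jTheta (t τ : ℂ) : ℂ :=
  Complex.exp (Real.pi * I * τ / 4) * (2 * Complex.sin (Real.pi * t)) *
    (∏' n : ℕ, (1 - jq τ ^ (n + 1))) *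
    (∏' n : ℕ, (1 - jq τ ^ (n + 1) * Complex.exp (2 * Real.pi * I * t)) *
      (1 - jq τ ^ (n + 1) * Complex.exp (-(2 * Real.pi * I * t))))

/-- `θ(t)` with `τ` fixed. -/
noncomputable def th (τ t : ℂ) : ℂ := jTheta t τ

/-- `θ'(0)`, the derivative of `θ(·,τ)` at `t = 0`. -/
noncomputable def thd (τ : ℂ) : ℂ := deriv (fun t => jTheta t τ) 0

/-- Membership in the lattice `ℤ + τℤ`. -/
def inLat (τ t : ℂ) : Prop := ∃ m n : ℤ, t = (m : ℂ) + (n : ℂ) * τ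

/-- The function `F₃` arising in Case 3 of the proof of birational invariance:
`F₃(t) = [θ(t+z)θ'(0)/(θ(t)θ(z))]²·[θ(t−z)θ'(0)/(θ(t)θ(−z))]·
[θ(t+2z)θ(z)/(θ(t+z)θ(2z))]·∏_{i=1,2}[θ(t+(aᵢ+1)z)θ(z)/(θ(t+z)θ((aᵢ+1)z))]`. -/
noncomputable def F₃ (τ z a₁ a₂ t : ℂ) : ℂ :=
  (th τ (t + z) * thd τ / (th τ t * th τ z)) ^ 2 *
  (th τ (t - z) * thd τ / (th τ t * th τ (-z))) *
  (th τ (t + 2 * z) * th τ z / (th τ (t + z) * th τ (2 * z))) *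
  ((th τ (t + (a₁ + 1) * z) * th τ z / (th τ (t + z) * th τ ((a₁ + 1) * z))) *
    (th τ (t + (a₂ + 1) * z) * th τ z / (th τ (t + z) * th τ ((a₂ + 1) * z))))

/-!
The product `∏ (1 - qⁿ⁺¹e^{2πit})(1 - qⁿ⁺¹e^{-2πit})` converges locally uniformly, so `θ` is
entire; it is odd, and its zeros (those of `sin(πt)` and of the factors) all lie in `ℤ + τℤ`.
At `0` the factors equal `(1 - qⁿ⁺¹)² ≠ 0`, so the zero of `θ` at `0` is simple.

Near `t = -z` the factor `θ(t+z)` occurs twice in the numerator of `F₃` and three times in its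
denominator, so `(t+z)·F₃(t) = ((t+z)/θ(t+z)) · F₃Reg(t)` with `F₃Reg` continuous at `-z`. The
first factor tends to `1/θ'(0)`, and `F₃Reg(-z)` simplifies by `θ(-z) = -θ(z)`, `θ(-2z) = -θ(2z)`.
-/

open scoped Real

section ThetaProduct

variable {q : ℂ}

noncomputable def thetaFactor (q t : ℂ) (n : ℕ) : ℂ :=
  (1 - q ^ (n + 1) * cexp (2 * π * I * t)) * (1 - q ^ (n + 1) * cexp (-(2 * π * I * t)))

lemma norm_one_sub_mul_one_sub_sub_one_le {R : Type*} [NormedRing R] (a b : R) :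
    ‖(1 - a) * (1 - b) - 1‖ ≤ ‖a‖ + ‖b‖ + ‖a‖ * ‖b‖ := by
  have h : (1 - a) * (1 - b) - 1 = -a + -b + a * b := by noncomm_ring
  rw [h]
  refine (norm_add₃_le ..).trans ?_
  rw [norm_neg, norm_neg]
  gcongr
  exact norm_mul_le a b

lemma norm_cexp_two_pi_I_mul_le {t : ℂ} {R : ℝ} (ht : |t.im| ≤ R) :
    ‖cexp (2 * π * I * t)‖ ≤ Real.exp (2 * π * R) ∧
      ‖cexp (-(2 * π * I * t))‖ ≤ Real.exp (2 * π * R) := by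
  have hre : (2 * π * I * t).re = -(2 * π * t.im) := by simp
  rw [norm_exp, norm_exp, neg_re, hre, neg_neg, Real.exp_le_exp, Real.exp_le_exp]
  have := abs_le.1 ht
  constructor <;> nlinarith [Real.pi_pos]

lemma norm_thetaFactor_sub_one_le (hq : ‖q‖ ≤ 1) {t : ℂ} {R : ℝ} (ht : |t.im| ≤ R) (n : ℕ) :
    ‖thetaFactor q t n - 1‖ ≤ 3 * Real.exp (2 * π * R) ^ 2 * ‖q‖ ^ (n + 1) := by
  obtain ⟨he, he'⟩ := norm_cexp_two_pi_I_mul_le ht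
  set M := Real.exp (2 * π * R)
  set r := ‖q‖ ^ (n + 1)
  have hM : 1 ≤ M := Real.one_le_exp (by nlinarith [Real.pi_pos, abs_nonneg t.im])
  have hr : r ≤ 1 := pow_le_one₀ (norm_nonneg q) hq
  have hr0 : 0 ≤ r := by positivity
  have ha : ‖q ^ (n + 1) * cexp (2 * π * I * t)‖ ≤ r * M := by
    rw [norm_mul, norm_pow]; gcongr
  have hb : ‖q ^ (n + 1) * cexp (-(2 * π * I * t))‖ ≤ r * M := by
    rw [norm_mul, norm_pow]; gcongr
  refine (norm_one_sub_mul_one_sub_sub_one_le _ _).trans ?_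
  have hab := mul_le_mul ha hb (norm_nonneg _) (by positivity)
  nlinarith [mul_le_mul_of_nonneg_left hM hr0,
    mul_le_mul_of_nonneg_right hr (by positivity : 0 ≤ M * M)]

lemma summable_geometric_succ_mul (hq : ‖q‖ < 1) (C : ℝ) :
    Summable fun n : ℕ ↦ C * ‖q‖ ^ (n + 1) :=
  ((summable_nat_add_iff 1).mpr (summable_geometric_of_lt_one (norm_nonneg q) hq)).mul_left C

lemma tprod_thetaFactor_ne_zero (hq : ‖q‖ < 1) {t : ℂ} (h : ∀ n, thetaFactor q t n ≠ 0) :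
    ∏' n, thetaFactor q t n ≠ 0 := by
  simpa using tprod_one_add_ne_zero_of_summable (f := fun n ↦ thetaFactor q t n - 1)
    (by simpa using h) ((summable_geometric_succ_mul hq _).of_nonneg_of_le (fun _ ↦ norm_nonneg _)
      (norm_thetaFactor_sub_one_le hq.le le_rfl))

lemma differentiable_tprod_thetaFactor (hq : ‖q‖ < 1) :
    Differentiable ℂ fun t ↦ ∏' n, thetaFactor q t n := by
  intro w
  set U := {t : ℂ | |t.im| < |w.im| + 1}
  have hU : IsOpen U := isOpen_lt (by fun_prop) continuous_const
  have hprod := Summable.hasProdLocallyUniformlyOn_nat_one_add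
    (f := fun n t ↦ thetaFactor q t n - 1) hU (summable_geometric_succ_mul hq _)
    (.of_forall fun n t ht ↦ norm_thetaFactor_sub_one_le hq.le (le_of_lt ht) n)
    (fun n ↦ by unfold thetaFactor; fun_prop)
  simp only [add_sub_cancel] at hprod
  refine (hprod.differentiableOn (.of_forall fun s ↦ ?_) hU).differentiableAt
    (hU.mem_nhds (by simp [U]))
  simpa [Finset.prod_fn] using DifferentiableOn.finsetProd fun n _ ↦ by
    unfold thetaFactor; fun_prop

end ThetaProduct

section Theta

variable {τ : ℂ}

lemma norm_jq_lt_one (hτ : 0 < τ.im) : ‖jq τ‖ < 1 :=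
  UpperHalfPlane.norm_exp_two_pi_I_lt_one ⟨τ, hτ⟩

lemma th_eq (τ t : ℂ) : th τ t = cexp (π * I * τ / 4) * (2 * Complex.sin (π * t)) *
    (∏' n : ℕ, (1 - jq τ ^ (n + 1))) * ∏' n, thetaFactor (jq τ) t n := rfl

lemma differentiable_th (hτ : 0 < τ.im) : Differentiable ℂ (th τ) := by
  have := differentiable_tprod_thetaFactor (norm_jq_lt_one hτ)
  simp only [funext (th_eq τ)]
  fun_prop

lemma th_neg (τ t : ℂ) : th τ (-t) = -th τ t := by
  have h : ∀ n, thetaFactor (jq τ) (-t) n = thetaFactor (jq τ) t n := fun n ↦ by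
    rw [thetaFactor, thetaFactor, mul_neg, neg_neg, mul_comm]
  simp only [th_eq, h, mul_neg, Complex.sin_neg]
  ring

lemma th_zero (τ : ℂ) : th τ 0 = 0 := by
  simp [th_eq]

lemma hasDerivAt_th_zero (hτ : 0 < τ.im) : HasDerivAt (th τ) (thd τ) 0 :=
  (differentiable_th hτ 0).hasDerivAt

lemma thd_eq (hτ : 0 < τ.im) : thd τ = cexp (π * I * τ / 4) * (2 * π) *
    (∏' n : ℕ, (1 - jq τ ^ (n + 1))) * ∏' n, thetaFactor (jq τ) 0 n := by
  have hsin : HasDerivAt (fun t : ℂ ↦ 2 * Complex.sin (π * t)) (2 * π) 0 := by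
    simpa using (((hasDerivAt_id (0 : ℂ)).const_mul (π : ℂ)).csin).const_mul 2
  have hprod := (differentiable_tprod_thetaFactor (norm_jq_lt_one hτ) 0).hasDerivAt
  have h := ((hsin.const_mul (cexp (π * I * τ / 4))).mul_const
    (∏' n : ℕ, (1 - jq τ ^ (n + 1)))).mul hprod
  rw [mul_zero, Complex.sin_zero, mul_zero, mul_zero, zero_mul, zero_mul, add_zero] at h
  exact (hasDerivAt_th_zero hτ).unique h

lemma tprod_one_sub_jq_pow_ne_zero (hτ : 0 < τ.im) : ∏' n : ℕ, (1 - jq τ ^ (n + 1)) ≠ 0 := by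
  simpa [jq, ModularForm.eta_q_eq_pow] using ModularForm.eta_tprod_ne_zero hτ

lemma inLat_of_neg {t : ℂ} (h : inLat τ (-t)) : inLat τ t := by
  obtain ⟨m, n, h⟩ := h
  exact ⟨-m, -n, by push_cast; linear_combination -h⟩

lemma inLat_of_jq_pow_mul_cexp_eq_one {t : ℂ} {n : ℕ}
    (h : jq τ ^ (n + 1) * cexp (2 * π * I * t) = 1) : inLat τ t := by
  rw [jq, ← Complex.exp_nat_mul, ← Complex.exp_add] at h
  obtain ⟨m, hm⟩ := Complex.exp_eq_one_iff.1 h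
  refine ⟨m, -(n + 1 : ℕ), ?_⟩
  have hπ : 2 * π * I ≠ 0 := by simp [Real.pi_ne_zero]
  apply mul_left_cancel₀ hπ
  push_cast at hm ⊢
  linear_combination hm

lemma thetaFactor_ne_zero {t : ℂ} (ht : ¬ inLat τ t) (n : ℕ) : thetaFactor (jq τ) t n ≠ 0 := by
  refine mul_ne_zero (fun h ↦ ht ?_) (fun h ↦ ht (inLat_of_neg ?_))
  · exact inLat_of_jq_pow_mul_cexp_eq_one (n := n) (by linear_combination -h)
  · exact inLat_of_jq_pow_mul_cexp_eq_one (n := n) (by rw [mul_neg]; linear_combination -h)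

lemma th_ne_zero (hτ : 0 < τ.im) {t : ℂ} (ht : ¬ inLat τ t) : th τ t ≠ 0 := by
  have hsin : Complex.sin (π * t) ≠ 0 := fun h ↦ by
    obtain ⟨k, hk⟩ := Complex.sin_eq_zero_iff.1 h
    refine ht ⟨k, 0, mul_left_cancel₀ (ofReal_ne_zero.2 Real.pi_ne_zero) ?_⟩
    linear_combination hk
  rw [th_eq]
  exact mul_ne_zero (mul_ne_zero (mul_ne_zero (exp_ne_zero _) (mul_ne_zero two_ne_zero hsin))
    (tprod_one_sub_jq_pow_ne_zero hτ))
    (tprod_thetaFactor_ne_zero (norm_jq_lt_one hτ) (thetaFactor_ne_zero ht))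

lemma thd_ne_zero (hτ : 0 < τ.im) : thd τ ≠ 0 := by
  have hfac : ∀ n, thetaFactor (jq τ) 0 n ≠ 0 := fun n ↦ by
    have : 1 - jq τ ^ (n + 1) ≠ 0 := sub_ne_zero.2 fun h ↦ by
      have := pow_lt_one₀ (norm_nonneg _) (norm_jq_lt_one hτ) n.succ_ne_zero
      rw [← norm_pow, ← h, norm_one] at this
      exact lt_irrefl _ this
    simpa [thetaFactor] using this
  rw [thd_eq hτ]
  exact mul_ne_zero (mul_ne_zero (mul_ne_zero (exp_ne_zero _) (by simp [Real.pi_ne_zero]))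
    (tprod_one_sub_jq_pow_ne_zero hτ)) (tprod_thetaFactor_ne_zero (norm_jq_lt_one hτ) hfac)

end Theta

lemma tendsto_sub_div_of_hasDerivAt {𝕜 : Type*} [NontriviallyNormedField 𝕜] {f : 𝕜 → 𝕜}
    {f' a : 𝕜} (hf : HasDerivAt f f' a) (ha : f a = 0) (hf' : f' ≠ 0) :
    Tendsto (fun t ↦ (t - a) / f t) (𝓝[≠] a) (𝓝 f'⁻¹) :=
  ((hasDerivAt_iff_tendsto_slope.1 hf).inv₀ hf').congr fun t ↦ by
    rw [slope_def_field, ha, sub_zero, inv_div]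

noncomputable def F₃Reg (τ z a₁ a₂ t : ℂ) : ℂ :=
  (thd τ / (th τ t * th τ z)) ^ 2 * (th τ (t - z) * thd τ / (th τ t * th τ (-z))) *
  (th τ (t + 2 * z) * th τ z / th τ (2 * z)) *
  ((th τ (t + (a₁ + 1) * z) * th τ z / th τ ((a₁ + 1) * z)) *
    (th τ (t + (a₂ + 1) * z) * th τ z / th τ ((a₂ + 1) * z)))

lemma F₃_eq_F₃Reg_div (τ z a₁ a₂ t : ℂ) : F₃ τ z a₁ a₂ t = F₃Reg τ z a₁ a₂ t / th τ (t + z) := by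
  rcases eq_or_ne (th τ (t + z)) 0 with h | h
  · -- both sides are `0`, the right one through division by zero
    simp [F₃, F₃Reg, h]
  · simp only [F₃, F₃Reg]
    field_simp

lemma continuousAt_F₃Reg {τ z : ℂ} (a₁ a₂ : ℂ) (hτ : 0 < τ.im) (hz : th τ z ≠ 0) :
    ContinuousAt (F₃Reg τ z a₁ a₂) (-z) := by
  have hθ := (differentiable_th hτ).continuous
  have hz' : th τ (-z) ≠ 0 := by rwa [th_neg, neg_ne_zero]
  unfold F₃Reg
  fun_prop (disch := simp [hz, hz'])

lemma F₃Reg_neg {τ z : ℂ} (a₁ a₂ : ℂ) (hz : th τ z ≠ 0) (h2z : th τ (2 * z) ≠ 0) :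
    (thd τ)⁻¹ * F₃Reg τ z a₁ a₂ (-z) =
      -((th τ (a₁ * z) * thd τ / (th τ ((1 + a₁) * z) * th τ z)) *
        (th τ (a₂ * z) * thd τ / (th τ ((1 + a₂) * z) * th τ z))) := by
  have hsub : -z - z = -(2 * z) := by ring
  have hshift : ∀ a : ℂ, -z + (a + 1) * z = a * z := fun a ↦ by ring
  have hcomm : ∀ a : ℂ, (1 + a) * z = (a + 1) * z := fun a ↦ by ring
  simp only [F₃Reg, hsub, hshift, hcomm, th_neg, show -z + 2 * z = z by ring]
  field_simp

theorem F₃_residue_at_neg_z_general (τ z a₁ a₂ : ℂ) (hτ : 0 < τ.im)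
    (hz : ¬ inLat τ z) (h2z : ¬ inLat τ (2 * z)) :
    Filter.Tendsto (fun t : ℂ => (t + z) * F₃ τ z a₁ a₂ t) (𝓝[≠] (-z))
      (𝓝 (-((th τ (a₁ * z) * thd τ / (th τ ((1 + a₁) * z) * th τ z)) *
        (th τ (a₂ * z) * thd τ / (th τ ((1 + a₂) * z) * th τ z))))) := by
  have hθz := th_ne_zero hτ hz
  have hpole : Tendsto (fun t ↦ (t + z) / th τ (t + z)) (𝓝[≠] (-z)) (𝓝 (thd τ)⁻¹) := by
    have hder := HasDerivAt.comp_add_const (-z) z (by simpa using hasDerivAt_th_zero hτ)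
    simpa using tendsto_sub_div_of_hasDerivAt hder (by simpa using th_zero τ) (thd_ne_zero hτ)
  have hreg := (continuousAt_F₃Reg a₁ a₂ hτ hθz).tendsto
  rw [← F₃Reg_neg a₁ a₂ hθz (th_ne_zero hτ h2z)]
  refine (hpole.mul (hreg.mono_left nhdsWithin_le_nhds)).congr fun t ↦ ?_
  rw [F₃_eq_F₃Reg_div, mul_div_assoc', div_mul_eq_mul_div]

/-- `F₃` has a simple pole at `t = −z` with residue
`lim_{t→−z} (t+z)F₃(t) = −∏_{i=1,2}[θ(aᵢz)θ'(0)/(θ((1+aᵢ)z)θ(z))]`. -/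
theorem F₃_residue_at_neg_z (τ z a₁ a₂ : ℂ) (hτ : 0 < τ.im) (ha : a₁ + a₂ = -2)
    (hz : ¬ inLat τ z) (h2z : ¬ inLat τ (2 * z))
    (ha₁ : ¬ inLat τ ((a₁ + 1) * z)) (ha₂ : ¬ inLat τ ((a₂ + 1) * z)) :
    Filter.Tendsto (fun t : ℂ => (t + z) * F₃ τ z a₁ a₂ t) (𝓝[≠] (-z))
      (𝓝 (-((th τ (a₁ * z) * thd τ / (th τ ((1 + a₁) * z) * th τ z)) *
        (th τ (a₂ * z) * thd τ / (th τ ((1 + a₂) * z) * th τ z))))) :=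
  F₃_residue_at_neg_z_general τ z a₁ a₂ hτ hz h2z
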